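/- arXiv:2310.05560 — 6 statements merged into one kernel-verified Lean document; each statement's English description precedes it below -/
import Mathlib

section
/- Let m be a positive integer and define f(x) = x + ⌊m/x⌋ for positive integers x. Let x_m be the smallest positive integer at which f attains its minimum. Then f is monotonically decreasing on the set of positive integers ≤ x_m: for all positive integers y₁ ≤ y₂ ≤ x_m, f(y₁) ≥ f(y₂). -/
/-!
Write `f x = x + m / x`. Since `m / x` is antitone in `x`, the step `f (x + 1) - f x` is either
`≤ 0` or `+1`, and it is `+1` exactly when `m / (x + 1) = m / x =: q`. In that case `q < x`, and
for `y ≥ x` either `y ≥ x + q`, or `y = x + k` with `k < q` and `(q - k) * (x + k) ≤ q * x ≤ m`;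
both give `f y ≥ f x`. So `f x ≤ f xm ≤ f y` for all `y`, i.e. `x` is a minimiser, and `x < xm`
is impossible. Hence `f` never increases on `[1, xm]`.
-/

namespace Nat

variable {m x y : ℕ}

theorem div_lt_of_div_succ_eq (hx : 0 < x) (hq : m / (x + 1) = m / x) : m / x < x := by
  have hle : m / x * (x + 1) ≤ m := hq ▸ Nat.div_mul_le_self m (x + 1)
  have hlt : m < m / x * x + x := by
    have := Nat.div_add_mod' m x
    have := Nat.mod_lt m hx
    omega
  nlinarith

theorem add_div_le_add_div_of_div_succ_eq (hx : 0 < x) (hq : m / (x + 1) = m / x)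
    (hxy : x ≤ y) : x + m / x ≤ y + m / y := by
  have hqx : m / x < x := div_lt_of_div_succ_eq hx hq
  have hqm : m / x * x ≤ m := Nat.div_mul_le_self m x
  generalize m / x = q at hqx hqm ⊢
  obtain ⟨k, rfl⟩ := Nat.exists_eq_add_of_le hxy
  rcases le_or_gt q k with hqk | hkq
  · exact Nat.le_add_right_of_le (by omega)
  · have hbound : (q - k) * (x + k) ≤ m :=
      calc (q - k) * (x + k) = (q - k) * x + (q - k) * k := by ring
        _ ≤ (q - k) * x + k * x := by rw [mul_comm k x]; gcongr; omega
        _ = q * x := by rw [← add_mul, Nat.sub_add_cancel hkq.le]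
        _ ≤ m := hqm
    have : q - k ≤ m / (x + k) := (Nat.le_div_iff_mul_le (by omega)).2 hbound
    omega

theorem succ_add_div_succ_le_of_lt_isLeast {xm : ℕ}
    (hxm : IsLeast {x : ℕ | 0 < x ∧ ∀ y : ℕ, 0 < y → x + m / x ≤ y + m / y} xm)
    (hx : 0 < x) (hlt : x < xm) : x + 1 + m / (x + 1) ≤ x + m / x := by
  by_contra! hcon
  have hq : m / (x + 1) = m / x := by
    have := Nat.div_le_div_left (Nat.le_add_right x 1) hx (a := m)
    omega
  have hmin : x + m / x ≤ xm + m / xm := add_div_le_add_div_of_div_succ_eq hx hq hlt.le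
  exact hlt.not_ge (hxm.2 ⟨hx, fun y hy => hmin.trans (hxm.1.2 y hy)⟩)

end Nat

theorem stmt1_general (m : ℕ) (xm : ℕ)
    (hxm : IsLeast {x : ℕ | 0 < x ∧ ∀ y : ℕ, 0 < y → x + m / x ≤ y + m / y} xm)
    (y₁ y₂ : ℕ) (hy₁ : 0 < y₁) (h12 : y₁ ≤ y₂) (h2 : y₂ ≤ xm) :
    y₂ + m / y₂ ≤ y₁ + m / y₁ := by
  have hanti : AntitoneOn (fun x => x + m / x) (Set.Icc 1 xm) :=
    antitoneOn_of_succ_le Set.ordConnected_Icc fun x _ hx hsx => by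
      rw [Order.succ_eq_add_one] at hsx ⊢
      exact Nat.succ_add_div_succ_le_of_lt_isLeast hxm hx.1 hsx.2
  exact hanti ⟨hy₁, h12.trans h2⟩ ⟨hy₁.trans_le h12, h2⟩ h12

/-- For positive `m`, let `f x = x + ⌊m/x⌋` on positive integers and let `xm` be the
least positive integer at which `f` attains its minimum. Then `f` is monotonically
decreasing on positive integers `≤ xm`. -/
theorem stmt1 (m : ℕ) (hm : 0 < m) (xm : ℕ)
    (hxm : IsLeast {x : ℕ | 0 < x ∧ ∀ y : ℕ, 0 < y → x + m / x ≤ y + m / y} xm)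
    (y₁ y₂ : ℕ) (hy₁ : 0 < y₁) (h12 : y₁ ≤ y₂) (h2 : y₂ ≤ xm) :
    y₂ + m / y₂ ≤ y₁ + m / y₁ :=
  stmt1_general m xm hxm y₁ y₂ hy₁ h12 h2
end

section
/- Let m be a positive integer and define f(x) = x + ⌊m/x⌋ for positive integers x, and let b = ⌊√m⌋. Then the minimum of f over positive integers is attained at some x ∈ {b, b+1, b+2}. -/
/-!
Write `f y = y + ⌊m / y⌋` and `b = ⌊√m⌋`. Comparing consecutive values shows that `f` is
antitone on `[1, b]` (there `y (y + 1) ≤ m`) and monotone on `[b + 1, ∞)` (there `m < y²`),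
so the minimum of `f` is `min (f b) (f (b + 1))`.
-/

namespace Nat

lemma succ_add_div_succ_le_add_div {m y : ℕ} (hy : 0 < y) (h : y * (y + 1) ≤ m) :
    y + 1 + m / (y + 1) ≤ y + m / y := by
  have hyq : y ≤ m / (y + 1) := (Nat.le_div_iff_mul_le (succ_pos y)).2 h
  have hqm : m / (y + 1) * (y + 1) ≤ m := div_mul_le_self m (y + 1)
  have : m / (y + 1) + 1 ≤ m / y := by
    rw [Nat.le_div_iff_mul_le hy]
    nlinarith
  omega

lemma add_div_le_succ_add_div_succ {m y : ℕ} (h : m < y * y) :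
    y + m / y ≤ y + 1 + m / (y + 1) := by
  have hm : m < (y + 1) * (m / (y + 1) + 1) := lt_mul_div_succ m (succ_pos y)
  have hqm : m / (y + 1) * (y + 1) ≤ m := div_mul_le_self m (y + 1)
  have hqy : m / (y + 1) < y := by nlinarith
  have : m / y < m / (y + 1) + 2 := by
    rw [Nat.div_lt_iff_lt_mul (by nlinarith)]
    nlinarith
  omega

lemma antitoneOn_add_div_Icc_sqrt (m : ℕ) :
    AntitoneOn (fun y => y + m / y) (Set.Icc 1 (sqrt m)) :=
  antitoneOn_of_add_one_le Set.ordConnected_Icc fun _ _ hy hy' =>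
    succ_add_div_succ_le_add_div hy.1 <| (Nat.mul_le_mul hy.2 hy'.2).trans (sqrt_le m)

lemma monotoneOn_add_div_Ici_sqrt (m : ℕ) :
    MonotoneOn (fun y => y + m / y) (Set.Ici (sqrt m + 1)) :=
  monotoneOn_of_le_add_one Set.ordConnected_Ici fun _ _ hy _ =>
    add_div_le_succ_add_div_succ <| (lt_succ_sqrt m).trans_le (Nat.mul_le_mul hy hy)

end Nat

theorem stmt2_general (m : ℕ) :
    ∃ x ∈ ({Nat.sqrt m, Nat.sqrt m + 1, Nat.sqrt m + 2} : Set ℕ),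
      ∀ y : ℕ, 0 < y → x + m / x ≤ y + m / y := by
  set f : ℕ → ℕ := fun y => y + m / y
  set b := Nat.sqrt m
  have hmin : ∀ y, 0 < y → min (f b) (f (b + 1)) ≤ f y := by
    intro y hy
    rcases le_or_gt y b with hyb | hby
    · exact (min_le_left _ _).trans
        (Nat.antitoneOn_add_div_Icc_sqrt m ⟨hy, hyb⟩ ⟨hy.trans_le hyb, le_rfl⟩ hyb)
    · exact (min_le_right _ _).trans (Nat.monotoneOn_add_div_Ici_sqrt m Set.self_mem_Ici hby hby)
  rcases min_choice (f b) (f (b + 1)) with h | h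
  · exact ⟨b, by simp, fun y hy => (h ▸ hmin y hy : f b ≤ f y)⟩
  · exact ⟨b + 1, by simp, fun y hy => (h ▸ hmin y hy : f (b + 1) ≤ f y)⟩

/-- For positive `m` and `f x = x + ⌊m/x⌋`, the minimum of `f` over positive integers
is attained at some `x ∈ {b, b+1, b+2}` where `b = ⌊√m⌋`. -/
theorem stmt2 (m : ℕ) (hm : 0 < m) :
    ∃ x ∈ ({Nat.sqrt m, Nat.sqrt m + 1, Nat.sqrt m + 2} : Set ℕ),
      ∀ y : ℕ, 0 < y → x + m / x ≤ y + m / y :=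
  stmt2_general m
end

section
/- Let m be a positive integer such that √(4m+1) is an integer, and let n = 2 + m + √(4m+1). Then with D = n² + m² − 4n − 2mn + 4, the open interval ((n−m−√D)/2, (n−m+√D)/2) has length exactly 1 and its endpoints are natural numbers; consequently it contains no integer. -/
/-! Completing the square, `D = (n - m - 2)² - 4m = s² - 4m = 1` where `s = √(4m+1)`, so the
endpoints are `(s + 1)/2` and `(s + 3)/2`. Since `s² ≡ 1 (mod 4)`, `s` is odd and these are
consecutive natural numbers. -/

lemma odd_of_sq_eq_four_mul_add_one {s m : ℕ} (hs : s ^ 2 = 4 * m + 1) : Odd s := by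
  have hsq : Odd (s ^ 2) := hs ▸ ⟨2 * m, by ring⟩
  exact (Nat.odd_pow_iff two_ne_zero).mp hsq

lemma discriminant_eq_one_of_sq_eq_four_mul_add_one {R : Type*} [CommRing R] {m s n : R}
    (hs : s ^ 2 = 4 * m + 1) (hn : n = 2 + m + s) :
    n ^ 2 + m ^ 2 - 4 * n - 2 * m * n + 4 = 1 := by
  subst hn
  linear_combination hs

lemma Int.not_lt_and_lt_add_one (a z : ℤ) : ¬((a : ℝ) < z ∧ (z : ℝ) < a + 1) := by
  rintro ⟨h₁, h₂⟩
  norm_cast at h₁ h₂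
  omega

theorem stmt10_general (m s : ℕ) (hs : s ^ 2 = 4 * m + 1) (n : ℕ)
    (hn : n = 2 + m + s) :
    let D : ℝ := (n : ℝ) ^ 2 + (m : ℝ) ^ 2 - 4 * n - 2 * m * n + 4
    (((n : ℝ) - m + Real.sqrt D) / 2 - ((n : ℝ) - m - Real.sqrt D) / 2 = 1) ∧
    (∃ a b : ℕ, ((a : ℝ) = ((n : ℝ) - m - Real.sqrt D) / 2 ∧
      (b : ℝ) = ((n : ℝ) - m + Real.sqrt D) / 2)) ∧
    ∀ z : ℤ, ¬(((n : ℝ) - m - Real.sqrt D) / 2 < (z : ℝ) ∧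
      (z : ℝ) < ((n : ℝ) - m + Real.sqrt D) / 2) := by
  intro D
  have hD : D = 1 :=
    discriminant_eq_one_of_sq_eq_four_mul_add_one (m := (m : ℝ)) (s := (s : ℝ))
      (by exact_mod_cast hs) (by exact_mod_cast hn)
  obtain ⟨k, rfl⟩ := odd_of_sq_eq_four_mul_add_one hs
  have hleft : ((n : ℝ) - m - Real.sqrt D) / 2 = (k + 1 : ℕ) := by
    rw [hD, Real.sqrt_one, hn]; push_cast; ring
  have hright : ((n : ℝ) - m + Real.sqrt D) / 2 = (k + 1 : ℕ) + 1 := by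
    rw [hD, Real.sqrt_one, hn]; push_cast; ring
  rw [hleft, hright]
  refine ⟨by ring, ⟨k + 1, k + 2, rfl, by push_cast; ring⟩, fun z => ?_⟩
  exact_mod_cast Int.not_lt_and_lt_add_one (k + 1) z

/-- If `4m+1` is a perfect square (with root `s`) and `n = 2 + m + s`, then with
`D = n² + m² − 4n − 2mn + 4` the open interval `((n−m−√D)/2, (n−m+√D)/2)` has length
exactly `1`, its endpoints are natural numbers, and it contains no integer. -/
theorem stmt10 (m s : ℕ) (hm : 0 < m) (hs : s ^ 2 = 4 * m + 1) (n : ℕ)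
    (hn : n = 2 + m + s) :
    let D : ℝ := (n : ℝ) ^ 2 + (m : ℝ) ^ 2 - 4 * n - 2 * m * n + 4
    (((n : ℝ) - m + Real.sqrt D) / 2 - ((n : ℝ) - m - Real.sqrt D) / 2 = 1) ∧
    (∃ a b : ℕ, ((a : ℝ) = ((n : ℝ) - m - Real.sqrt D) / 2 ∧
      (b : ℝ) = ((n : ℝ) - m + Real.sqrt D) / 2)) ∧
    ∀ z : ℤ, ¬(((n : ℝ) - m - Real.sqrt D) / 2 < (z : ℝ) ∧
      (z : ℝ) < ((n : ℝ) - m + Real.sqrt D) / 2) :=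
  stmt10_general m s hs n hn
end

section
/- For all positive integers m and n with 2 + m + 2√m < n ≤ 2 + m + √(4m+1), the open interval ((n−m−√D)/2, (n−m+√D)/2), where D = n² + m² − 4n − 2mn + 4, contains no integer k₀ ≥ 2. Equivalently, there is no integer k₀ ≥ 2 with k₀² + k₀(m−n) + n − 1 < 0. -/
/-!
Put `d = n - m - 2`. The two bounds on `n` say `4m < d² ≤ 4m + 1`, so `d² = 4m + 1` and
`D = d² - 4m = 1`. Completing the square, `4 (k² + k(m - n) + n - 1) = (2k + m - n)² - D`,
so a negative value forces `2k = n - m`; then `d = 2(k - 1)` is even, while `d² = 4m + 1` is odd.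
-/

theorem four_mul_lt_sq_sub_of_add_two_sqrt_lt {m x : ℝ} (hm : 0 ≤ m)
    (h : 2 + m + 2 * √m < x) : 4 * m < (x - m - 2) ^ 2 :=
  calc 4 * m = (2 * √m) ^ 2 := by rw [mul_pow, Real.sq_sqrt hm]; norm_num
    _ < (x - m - 2) ^ 2 := pow_lt_pow_left₀ (by linarith) (by positivity) two_ne_zero

theorem sq_sub_le_of_le_add_sqrt {m x : ℝ} (hm : 0 ≤ 4 * m + 1) (hx : 2 + m ≤ x)
    (h : x ≤ 2 + m + √(4 * m + 1)) : (x - m - 2) ^ 2 ≤ 4 * m + 1 :=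
  (Real.le_sqrt (by linarith) hm).mp (by linarith)

theorem quadratic_nonneg_of_sq_sub_eq {m n : ℤ} (h : (n - m - 2) ^ 2 = 4 * m + 1) (k : ℤ) :
    0 ≤ k ^ 2 + k * (m - n) + n - 1 := by
  have hcompl : 4 * (k ^ 2 + k * (m - n) + n - 1) = (2 * k + m - n) ^ 2 - 1 := by
    linear_combination -h
  by_contra! hneg
  have hcentre : 2 * k + m - n = 0 := by
    have := (sq_lt_one_iff_abs_lt_one _).mp (show (2 * k + m - n) ^ 2 < 1 by linarith)
    rw [abs_lt] at this
    omega
  have hfour : (4 : ℤ) ∣ 1 :=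
    ⟨(k - 1) ^ 2 - m, by linear_combination -h + (m - n - 2 * k + 4) * hcentre⟩
  norm_num at hfour

theorem stmt11_general (m n : ℕ)
    (hn1 : 2 + (m : ℝ) + 2 * Real.sqrt (m : ℝ) < (n : ℝ))
    (hn2 : (n : ℝ) ≤ 2 + (m : ℝ) + Real.sqrt (4 * (m : ℝ) + 1)) :
    ¬∃ k₀ : ℤ, 2 ≤ k₀ ∧ k₀ ^ 2 + k₀ * ((m : ℤ) - n) + n - 1 < 0 := by
  rintro ⟨k, -, hk⟩
  have hlow : 4 * (m : ℤ) < ((n : ℤ) - m - 2) ^ 2 := by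
    exact_mod_cast four_mul_lt_sq_sub_of_add_two_sqrt_lt m.cast_nonneg hn1
  have hup : ((n : ℤ) - m - 2) ^ 2 ≤ 4 * m + 1 := by
    exact_mod_cast sq_sub_le_of_le_add_sqrt (by positivity)
      (by linarith [Real.sqrt_nonneg (m : ℝ)]) hn2
  exact (quadratic_nonneg_of_sq_sub_eq (le_antisymm hup hlow) k).not_gt hk

/-- For positive integers `m, n` with `2 + m + 2√m < n ≤ 2 + m + √(4m+1)`, there is
no integer `k₀ ≥ 2` with `k₀² + k₀(m−n) + n − 1 < 0`. -/
theorem stmt11 (m n : ℕ) (hm : 0 < m) (hn : 0 < n)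
    (hn1 : 2 + (m : ℝ) + 2 * Real.sqrt (m : ℝ) < (n : ℝ))
    (hn2 : (n : ℝ) ≤ 2 + (m : ℝ) + Real.sqrt (4 * (m : ℝ) + 1)) :
    ¬∃ k₀ : ℤ, 2 ≤ k₀ ∧ k₀ ^ 2 + k₀ * ((m : ℤ) - n) + n - 1 < 0 :=
  stmt11_general m n hn1 hn2
end

section
/- For every positive integer m, the minimum over integers k₀ ≥ 2 of k₀ + m + ⌊m/(k₀−1)⌋ + 2 equals ⌊2 + m + √(4m+1)⌋ + 1, i.e. the least n for which some integer k₀ ≥ 2 satisfies n ≥ k₀ + m + ⌊m/(k₀−1)⌋ + 2 is ⌊2 + m + √(4m+1)⌋ + 1. -/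
/-- Lower bound: for every `j ≥ 1`, `Nat.sqrt (4m+1) ≤ j + m / j`. -/
lemma aux_lb (m j : ℕ) (hj : 1 ≤ j) : Nat.sqrt (4 * m + 1) ≤ j + m / j := by
  have h := Nat.lt_succ_sqrt (4 * m + 1)
  set q := m / j with hq
  have hmlt : m < j * (q + 1) := by
    rw [hq]
    exact Nat.lt_mul_div_succ m (by omega)
  have : Nat.sqrt (4 * m + 1) < j + q + 1 := by
    rw [Nat.sqrt_lt]
    have hZ : (4 * m + 1 : ℤ) < ((j : ℤ) + q + 1) * ((j : ℤ) + q + 1) := by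
      have hm' : (m : ℤ) < (j : ℤ) * ((q : ℤ) + 1) := by exact_mod_cast hmlt
      nlinarith [sq_nonneg ((j : ℤ) - (q : ℤ) - 1)]
    exact_mod_cast hZ
  omega

/-- Existence: some `j ≥ 1` attains `j + m / j = Nat.sqrt (4m+1)`. -/
lemma aux_ex (m : ℕ) (hm : 0 < m) :
    ∃ j : ℕ, 1 ≤ j ∧ j + m / j = Nat.sqrt (4 * m + 1) := by
  set t := Nat.sqrt m with ht
  have h1 : t * t ≤ m := Nat.sqrt_le m
  have h2 : m < (t + 1) * (t + 1) := Nat.lt_succ_sqrt m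
  have ht1 : 1 ≤ t := Nat.le_sqrt.2 (by omega)
  by_cases hc : m < t * t + t
  · -- s = 2t, j = t
    refine ⟨t, ht1, ?_⟩
    have hdiv : m / t = t := by
      apply Nat.div_eq_of_lt_le
      · omega
      · calc m < t * t + t := hc
          _ ≤ (t + 1) * t := by ring_nf; omega
    have hs : Nat.sqrt (4 * m + 1) = 2 * t := by
      symm
      rw [Nat.eq_sqrt]
      constructor <;> nlinarith
    omega
  · -- s = 2t+1, j = t+1
    refine ⟨t + 1, by omega, ?_⟩
    have hdiv : m / (t + 1) = t := by
      apply Nat.div_eq_of_lt_le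
      · nlinarith
      · nlinarith
    have hs : Nat.sqrt (4 * m + 1) = 2 * t + 1 := by
      symm
      rw [Nat.eq_sqrt]
      constructor <;> nlinarith
    omega

/-- For a positive integer `m`, the minimum over integers `k₀ ≥ 2` of
`g(k₀) = k₀ + m + ⌊m/(k₀−1)⌋ + 2` equals `⌊2 + m + √(4m+1)⌋ + 1`; equivalently, the
least `n` for which some integer `k₀ ≥ 2` satisfies `n ≥ g(k₀)` is this same value. -/
theorem stmt13 (m : ℕ) (hm : 0 < m) :
    IsLeast {v : ℤ | ∃ k₀ : ℤ, 2 ≤ k₀ ∧ v = k₀ + (m : ℤ) + (m : ℤ) / (k₀ - 1) + 2}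
      (⌊2 + (m : ℝ) + Real.sqrt (4 * (m : ℝ) + 1)⌋ + 1) ∧
    IsLeast {v : ℤ | ∃ k₀ : ℤ, 2 ≤ k₀ ∧ v ≥ k₀ + (m : ℤ) + (m : ℤ) / (k₀ - 1) + 2}
      (⌊2 + (m : ℝ) + Real.sqrt (4 * (m : ℝ) + 1)⌋ + 1) := by
  set s := Nat.sqrt (4 * m + 1) with hs
  -- compute the floor
  have hfloor : ⌊2 + (m : ℝ) + Real.sqrt (4 * (m : ℝ) + 1)⌋ + 1 = (m : ℤ) + (s : ℤ) + 3 := by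
    have h1 : (4 * (m : ℝ) + 1) = ((4 * m + 1 : ℕ) : ℝ) := by push_cast; ring
    have h2 : (2 + (m : ℝ)) = (((2 + m : ℤ) : ℝ)) := by push_cast; ring
    rw [h1, h2, Int.floor_intCast_add, Real.floor_real_sqrt_eq_nat_sqrt]
    push_cast
    ring
  rw [hfloor]
  -- membership witness
  obtain ⟨j, hj1, hjeq⟩ := aux_ex m hm
  have hmem : ((m : ℤ) + (s : ℤ) + 3) ∈
      {v : ℤ | ∃ k₀ : ℤ, 2 ≤ k₀ ∧ v = k₀ + (m : ℤ) + (m : ℤ) / (k₀ - 1) + 2} := by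
    refine ⟨(j : ℤ) + 1, by exact_mod_cast Nat.succ_le_succ hj1, ?_⟩
    have hdiv : (m : ℤ) / ((j : ℤ) + 1 - 1) = ((m / j : ℕ) : ℤ) := by
      rw [show ((j : ℤ) + 1 - 1) = (j : ℤ) by ring]
      exact (Int.natCast_div m j)
    rw [hdiv]
    have : (j : ℤ) + ((m / j : ℕ) : ℤ) = (s : ℤ) := by exact_mod_cast hjeq
    omega
  -- lower bound for both sets
  have hlb : ∀ v : ℤ, (∃ k₀ : ℤ, 2 ≤ k₀ ∧ v ≥ k₀ + (m : ℤ) + (m : ℤ) / (k₀ - 1) + 2) →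
      (m : ℤ) + (s : ℤ) + 3 ≤ v := by
    rintro v ⟨k₀, hk₀, hv⟩
    set j : ℕ := (k₀ - 1).toNat with hjdef
    have hjpos : 1 ≤ j := by omega
    have hjcast : ((j : ℤ)) = k₀ - 1 := by omega
    have hdiv : (m : ℤ) / (k₀ - 1) = ((m / j : ℕ) : ℤ) := by
      rw [← hjcast]
      exact (Int.natCast_div m j)
    have hb := aux_lb m j hjpos
    have hb' : (s : ℤ) ≤ (j : ℤ) + ((m / j : ℕ) : ℤ) := by exact_mod_cast hb
    rw [hdiv] at hv
    omega
  constructor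
  · exact ⟨hmem, fun v ⟨k₀, hk₀, hv⟩ => hlb v ⟨k₀, hk₀, le_of_eq hv.symm⟩⟩
  · obtain ⟨k₀, hk₀, heq⟩ := hmem
    exact ⟨⟨k₀, hk₀, ge_of_eq heq⟩, hlb⟩
end

section
/- Let k ≥ 2 and m, n be positive integers with n ≥ k + m + ⌊m/(k−1)⌋ + 2. Let G be the disjoint union of ⌊n/k⌋ copies of the complete graph K_k together with one copy of K_{n mod k}, and let κ assign to each vertex all colors of {1,…,k} except one, in such a way that within each component of size k every two distinct vertices miss different colors (and similarly injectively within the smaller component). Then κ is a highly (1,m)-resistant vertex k-multicoloring of G. -/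
/-!
Every vertex misses exactly one colour, so a single vertex never carries all `k` colours, while
two adjacent vertices, missing different colours, together carry all of them. It therefore
suffices to find, outside the block of the removed vertex `a`, a block with two vertices that
avoid `M`. If there were none, each of the other `n / k` blocks would keep at most one vertex,
so `n ≤ k + n / k + m`; moreover each full block other than `a`'s would lose at least `k - 1`
vertices to `M`, so `(n / k - 1) (k - 1) ≤ m`. Together these contradict
`n ≥ k + m + ⌊m/(k-1)⌋ + 2`.
-/

/-- The vertices remaining after removing `N₀(A) ∪ M` from the graph `G`:
those vertices not in `A`, not in `M`, and not adjacent to any vertex of `A`. -/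
def restSet {V : Type} (G : SimpleGraph V) (A M : Finset V) : Set V :=
  {v | v ∉ A ∧ v ∉ M ∧ ∀ a ∈ A, ¬G.Adj a v}

/-- `κ : V → 𝒫({1,…,k})` (colors modeled by `Fin k`) is a highly `(a,m)`-resistant
vertex `k`-multicoloring of `G`: no `a` vertices together hold all `k` colors
(the `a`-HR condition), and for all `A, M ⊆ V(G)` with `|A| = a`, `|M| = m`, some
connected component of `G − (N₀(A) ∪ M)` carries all `k` colors. -/
def HighlyResistant {V : Type} [Fintype V] (G : SimpleGraph V) (a m k : ℕ)
    (κ : V → Finset (Fin k)) : Prop :=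
  (∀ A : Finset V, A.card = a → A.biUnion κ ≠ Finset.univ) ∧
  ∀ A M : Finset V, A.card = a → M.card = m →
    ∃ C : (G.induce (restSet G A M)).ConnectedComponent,
      ∀ i : Fin k, ∃ u : restSet G A M,
        (G.induce (restSet G A M)).connectedComponentMk u = C ∧ i ∈ κ u.val

/-- The disjoint union of `⌊n/k⌋` copies of `K_k` together with one copy of
`K_{n mod k}`, on vertex set `Fin n`: two distinct vertices are adjacent iff they lie
in the same block of `k` consecutive vertices. -/
def blockGraph (n k : ℕ) : SimpleGraph (Fin n) where
  Adj v w := v ≠ w ∧ (v : ℕ) / k = (w : ℕ) / k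
  symm := ⟨fun v w h => ⟨h.1.symm, h.2.symm⟩⟩
  loopless := ⟨fun v h => h.1 rfl⟩

open Finset

def block (n k b : ℕ) : Finset (Fin n) := {v | (v : ℕ) / k = b}

section Block

variable {n k : ℕ}

lemma map_valEmbedding_block (hk : 0 < k) (b : ℕ) :
    (block n k b).map Fin.valEmbedding = Ico (b * k) (min n (b * k + k)) := by
  ext x
  simp only [block, Nat.div_eq_iff hk, mem_map, mem_filter, mem_univ, true_and,
    Fin.valEmbedding_apply, mem_Ico, lt_inf_iff]
  constructor
  · rintro ⟨v, hv, rfl⟩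
    have := v.isLt
    omega
  · rintro ⟨h₁, h₂, h₃⟩
    exact ⟨⟨x, h₂⟩, show b * k ≤ x ∧ x ≤ b * k + k - 1 by omega, rfl⟩

lemma card_block (hk : 0 < k) (b : ℕ) : #(block n k b) = min n (b * k + k) - b * k := by
  rw [← card_map Fin.valEmbedding, map_valEmbedding_block hk, Nat.card_Ico]

lemma card_block_le (hk : 0 < k) (b : ℕ) : #(block n k b) ≤ k := by
  rw [card_block hk]
  have := min_le_right n (b * k + k)
  omega

lemma card_block_of_lt_div (hk : 0 < k) {b : ℕ} (hb : b < n / k) : #(block n k b) = k := by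
  have hbk : (b + 1) * k ≤ n := (Nat.le_div_iff_mul_le hk).mp hb
  rw [card_block hk, min_eq_right (by linarith)]
  omega

lemma sum_card_block_inter (k : ℕ) (s : Finset (Fin n)) :
    ∑ b ∈ range (n / k + 1), #(block n k b ∩ s) = #s := by
  rw [card_eq_sum_card_fiberwise (f := fun v : Fin n => (v : ℕ) / k) (t := range (n / k + 1))
    fun v _ => mem_range.mpr (Nat.lt_succ_of_le (Nat.div_le_div_right v.isLt.le))]
  refine sum_congr rfl fun b _ => congrArg card ?_
  ext v
  simp [block, and_comm]

lemma exists_block_two_le_card_sdiff (hk : 2 ≤ k) (M : Finset (Fin n))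
    (hn : k + #M + #M / (k - 1) + 2 ≤ n) {c : ℕ} (hc : c ≤ n / k) :
    ∃ b ≠ c, 2 ≤ #(block n k b \ M) := by
  by_contra! hsmall
  set q := n / k
  have hk₀ : 0 < k := by omega
  have hsplit (b : ℕ) : #(block n k b) = #(block n k b \ M) + #(block n k b ∩ M) :=
    (card_sdiff_add_card_inter _ _).symm
  have hc' : c ∈ range (q + 1) := mem_range.mpr (Nat.lt_succ_of_le hc)
  have hcount : n ≤ k + q + #M :=
    calc n = ∑ b ∈ range (q + 1), #(block n k b ∩ univ) := by
          rw [sum_card_block_inter, card_univ, Fintype.card_fin]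
      _ = #(block n k c) + ∑ b ∈ (range (q + 1)).erase c, #(block n k b) := by
          simp only [inter_univ]
          exact (add_sum_erase _ _ hc').symm
      _ ≤ k + ∑ b ∈ (range (q + 1)).erase c, (1 + #(block n k b ∩ M)) := by
          gcongr with b hb
          · exact card_block_le hk₀ c
          · have := hsmall b (ne_of_mem_erase hb)
            rw [hsplit b]
            omega
      _ ≤ k + q + #M := by
          rw [sum_add_distrib, sum_const, card_erase_of_mem hc', card_range, smul_eq_mul,
            mul_one, add_tsub_cancel_right, add_assoc]
          gcongr
          calc _ ≤ ∑ b ∈ range (q + 1), #(block n k b ∩ M) :=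
                sum_le_sum_of_subset (erase_subset _ _)
            _ = #M := sum_card_block_inter k M
  have hfull : (q - 1) * (k - 1) ≤ #M :=
    calc (q - 1) * (k - 1) ≤ #((range q).erase c) * (k - 1) := by
          gcongr
          simpa using pred_card_le_card_erase (s := range q) (a := c)
      _ = ∑ b ∈ (range q).erase c, (k - 1) := by rw [sum_const, smul_eq_mul]
      _ ≤ ∑ b ∈ (range q).erase c, #(block n k b ∩ M) := by
          gcongr with b hb
          have := hsmall b (ne_of_mem_erase hb)
          have := card_block_of_lt_div hk₀ (mem_range.mp (mem_of_mem_erase hb))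
          rw [hsplit b] at this
          omega
      _ ≤ ∑ b ∈ range (q + 1), #(block n k b ∩ M) :=
          sum_le_sum_of_subset ((erase_subset _ _).trans (range_subset_range.mpr q.le_succ))
      _ = #M := sum_card_block_inter k M
  have : q - 1 ≤ #M / (k - 1) := (Nat.le_div_iff_mul_le (by omega)).mpr hfull
  omega

lemma block_sdiff_subset_restSet {a : Fin n} {b : ℕ} (hb : b ≠ (a : ℕ) / k) (M : Finset (Fin n)) :
    ↑(block n k b \ M) ⊆ restSet (blockGraph n k) {a} M := by
  intro v hv
  simp only [block, coe_sdiff, coe_filter, mem_univ, true_and, Set.mem_sdiff,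
    Set.mem_ofPred_eq, mem_coe] at hv
  refine ⟨fun hva => hb ?_, hv.2, fun a' ha' hadj => hb ?_⟩
  · rw [← hv.1, mem_singleton.mp hva]
  · rw [← hv.1, ← mem_singleton.mp ha', hadj.2]

lemma blockGraph_mod_ne_mod_of_adj {u w : Fin n} (h : (blockGraph n k).Adj u w) :
    (u : ℕ) % k ≠ (w : ℕ) % k := fun hmod =>
  h.1 (Fin.ext (by rw [← Nat.div_add_mod (u : ℕ) k, ← Nat.div_add_mod (w : ℕ) k, h.2, hmod]))

end Block

lemma SimpleGraph.exists_connectedComponent_forall_mem_of_adj {W α : Type*}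
    {H : SimpleGraph W} {κ : W → Finset α} {u w : W} (huw : H.Adj u w)
    (hcover : ∀ i, i ∈ κ u ∨ i ∈ κ w) :
    ∃ C : H.ConnectedComponent, ∀ i, ∃ x, H.connectedComponentMk x = C ∧ i ∈ κ x :=
  ⟨H.connectedComponentMk u, fun i => (hcover i).elim (fun hu => ⟨u, rfl, hu⟩)
    fun hw => ⟨w, ConnectedComponent.sound huw.symm.reachable, hw⟩⟩

theorem stmt16_general (k m n : ℕ) (hk : 2 ≤ k)
    (hn : n ≥ k + m + m / (k - 1) + 2) :
    HighlyResistant (blockGraph n k) 1 m k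
      (fun v => Finset.univ.filter fun i : Fin k => (i : ℕ) ≠ (v : ℕ) % k) := by
  refine ⟨fun A hA => ?_, fun A M hA hM => ?_⟩
  · obtain ⟨a, rfl⟩ := card_eq_one.mp hA
    intro hall
    have := hall ▸ mem_univ (⟨a % k, Nat.mod_lt _ (by omega)⟩ : Fin k)
    simp at this
  · obtain ⟨a, rfl⟩ := card_eq_one.mp hA
    obtain ⟨b, hb, htwo⟩ := exists_block_two_le_card_sdiff hk M (by rw [hM]; exact hn)
      (Nat.div_le_div_right a.isLt.le)
    obtain ⟨u, hu, w, hw, huw⟩ := one_lt_card.mp htwo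
    have hsub := block_sdiff_subset_restSet hb M
    have hadj : (blockGraph n k).Adj u w := by
      simp only [block, mem_sdiff, mem_filter, mem_univ, true_and] at hu hw
      exact ⟨huw, hu.1.trans hw.1.symm⟩
    refine SimpleGraph.exists_connectedComponent_forall_mem_of_adj
      (u := ⟨u, hsub (mem_coe.mpr hu)⟩) (w := ⟨w, hsub (mem_coe.mpr hw)⟩) hadj fun i => ?_
    simp only [mem_filter, mem_univ, true_and]
    have := blockGraph_mod_ne_mod_of_adj hadj
    omega

/-- If `k ≥ 2` and `n ≥ k + m + ⌊m/(k−1)⌋ + 2`, then the disjoint union of `⌊n/k⌋`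
copies of `K_k` plus one `K_{n mod k}`, where each vertex gets all colors except one
and distinct vertices of a component miss different colors, is a highly
`(1,m)`-resistant vertex `k`-multicoloring. -/
theorem stmt16 (k m n : ℕ) (hk : 2 ≤ k) (hm : 1 ≤ m)
    (hn : n ≥ k + m + m / (k - 1) + 2) :
    HighlyResistant (blockGraph n k) 1 m k
      (fun v => Finset.univ.filter fun i : Fin k => (i : ℕ) ≠ (v : ℕ) % k) :=
  stmt16_general k m n hk hn
end
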